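/- There exists a unit vector |Ψ⟩ in C² ⊗ C² and pairs of projections (P^α_1, P^α_2) on the first factor and (P^β_1, P^β_2) on the second factor such that no probability measure on {0,1}⁴ reproduces all four pairwise distributions ⟨Ψ|(P^α_i ⊗ P^β_j)|Ψ⟩ as marginals (violation of the CHSH/classical joint-distribution constraint). -/

import Mathlib

open scoped ComplexConjugate

/-- Elementary tensor of two vectors. -/
noncomputable def tens {m n : ℕ} (a : EuclideanSpace ℂ (Fin m)) (b : EuclideanSpace ℂ (Fin n)) :
    EuclideanSpace ℂ (Fin m × Fin n) :=
  WithLp.toLp 2 (fun p : Fin m × Fin n => a p.1 * b p.2)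

/-- Outer product |ψ⟩⟨ψ| as a matrix. -/
noncomputable def outer {ι : Type*} [Fintype ι] (ψ : EuclideanSpace ℂ ι) : Matrix ι ι ℂ :=
  fun p q => ψ p * conj (ψ q)

/-- Kronecker (tensor) product of operators. -/
noncomputable def kron {m n : ℕ} (A : Matrix (Fin m) (Fin m) ℂ) (B : Matrix (Fin n) (Fin n) ℂ) :
    Matrix (Fin m × Fin n) (Fin m × Fin n) ℂ :=
  fun p q => A p.1 q.1 * B p.2 q.2

/-- Partial trace over the second factor. -/
noncomputable def ptraceB {m n : ℕ} (M : Matrix (Fin m × Fin n) (Fin m × Fin n) ℂ) :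
    Matrix (Fin m) (Fin m) ℂ :=
  fun i j => ∑ k, M (i, k) (j, k)

/-- Partial trace over the first factor. -/
noncomputable def ptraceA {m n : ℕ} (M : Matrix (Fin m × Fin n) (Fin m × Fin n) ℂ) :
    Matrix (Fin n) (Fin n) ℂ :=
  fun i j => ∑ k, M (k, i) (k, j)

/-- Expectation value ⟨ψ| M |ψ⟩. -/
noncomputable def expect {ι : Type*} [Fintype ι] (M : Matrix ι ι ℂ) (ψ : EuclideanSpace ℂ ι) : ℂ :=
  ∑ p, conj (ψ p) * M.mulVec ψ p


/-- If `s = true` this is the projection `P`, otherwise its complement `1 - P`. -/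
noncomputable def projVal {m : ℕ} (P : Matrix (Fin m) (Fin m) ℂ) (s : Bool) :
    Matrix (Fin m) (Fin m) ℂ :=
  if s then P else 1 - P


/-!
A classical joint distribution of four ±1-valued outcomes obeys the CHSH inequality
`E₀₀ + E₀₁ + E₁₀ - E₁₁ ≤ 2`, since the combination is at most 2 pointwise. The marginals
determine each correlator `Eᵢⱼ`, and for the projections `(1 + R)/2` the quantum value of that
combination of marginals is `⟨Ψ|Rᵢ ⊗ Sⱼ|Ψ⟩`. On the maximally entangled two-qubit state,
`⟨Ψ|(aσ_z + bσ_x) ⊗ (cσ_z + dσ_x)|Ψ⟩ = ac + bd`; taking `σ_z, σ_x` for Alice and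
`(3σ_z ± 4σ_x)/5` for Bob gives `3/5 + 3/5 + 4/5 + 4/5 = 14/5 > 2`.
-/

open Finset hiding expect

def boolSign (b : Bool) : ℝ := if b then 1 else -1

@[simp] lemma boolSign_true : boolSign true = 1 := rfl

@[simp] lemma boolSign_false : boolSign false = -1 := rfl

lemma boolSign_chsh_le (a₀ a₁ b₀ b₁ : Bool) :
    boolSign a₀ * boolSign b₀ + boolSign a₀ * boolSign b₁ + boolSign a₁ * boolSign b₀
      - boolSign a₁ * boolSign b₁ ≤ 2 := by
  cases a₀ <;> cases a₁ <;> cases b₀ <;> cases b₁ <;> norm_num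

section Classical

variable {ι κ : Type*} [Fintype ι] [Fintype κ] [DecidableEq ι] [DecidableEq κ]

def correlation (f : (ι → Bool) × (κ → Bool) → ℝ) (i : ι) (j : κ) : ℝ :=
  ∑ x, f x * boolSign (x.1 i) * boolSign (x.2 j)

lemma correlation_eq_sum_marginal (f : (ι → Bool) × (κ → Bool) → ℝ) (i : ι) (j : κ) :
    correlation f i j = ∑ s, ∑ t, boolSign s * boolSign t *
      ∑ x ∈ univ.filter (fun x : (ι → Bool) × (κ → Bool) => x.1 i = s ∧ x.2 j = t), f x := by
  simp only [correlation, sum_filter, mul_sum, Fintype.sum_bool, ← sum_add_distrib]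
  refine sum_congr rfl fun x _ => ?_
  cases x.1 i <;> cases x.2 j <;> simp

theorem chsh_inequality {f : (ι → Bool) × (κ → Bool) → ℝ} (hf : ∀ x, 0 ≤ f x)
    (hf1 : ∑ x, f x = 1) (i₀ i₁ : ι) (j₀ j₁ : κ) :
    correlation f i₀ j₀ + correlation f i₀ j₁ + correlation f i₁ j₀ - correlation f i₁ j₁ ≤ 2 :=
  calc _ = ∑ x, f x * (boolSign (x.1 i₀) * boolSign (x.2 j₀)
          + boolSign (x.1 i₀) * boolSign (x.2 j₁) + boolSign (x.1 i₁) * boolSign (x.2 j₀)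
          - boolSign (x.1 i₁) * boolSign (x.2 j₁)) := by
        simp only [correlation, ← sum_add_distrib, ← sum_sub_distrib]
        exact sum_congr rfl fun x _ => by ring
    _ ≤ ∑ x, f x * 2 :=
        sum_le_sum fun x _ => mul_le_mul_of_nonneg_left (boolSign_chsh_le ..) (hf x)
    _ = 2 := by rw [← sum_mul, hf1, one_mul]

end Classical

section Quantum

variable {ι : Type*} [Fintype ι]

lemma expect_sub (M N : Matrix ι ι ℂ) (ψ : EuclideanSpace ℂ ι) :
    expect (M - N) ψ = expect M ψ - expect N ψ := by
  simp only [expect, Matrix.sub_mulVec, Pi.sub_apply, mul_sub, sum_sub_distrib]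

lemma sum_boolSign_mul_expect_kron_projVal {m n : ℕ} (P : Matrix (Fin m) (Fin m) ℂ)
    (Q : Matrix (Fin n) (Fin n) ℂ) (ψ : EuclideanSpace ℂ (Fin m × Fin n)) :
    ∑ s, ∑ t, boolSign s * boolSign t * (expect (kron (projVal P s) (projVal Q t)) ψ).re =
      (expect (kron ((2 : ℂ) • P - 1) ((2 : ℂ) • Q - 1)) ψ).re := by
  have hkron : kron ((2 : ℂ) • P - 1) ((2 : ℂ) • Q - 1) =
      kron P Q - kron P (1 - Q) - (kron (1 - P) Q - kron (1 - P) (1 - Q)) := by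
    ext p q
    simp only [kron, Matrix.sub_apply, Matrix.smul_apply, smul_eq_mul]
    ring
  rw [hkron]
  simp only [expect_sub, Complex.sub_re, Fintype.sum_bool, projVal, boolSign_true,
    boolSign_false, Bool.false_eq_true, if_true, if_false]
  ring

end Quantum

section Reflection

variable {ι : Type*} [DecidableEq ι]

noncomputable def reflectionProj (R : Matrix ι ι ℂ) : Matrix ι ι ℂ := (2 : ℂ)⁻¹ • (1 + R)

lemma two_smul_reflectionProj_sub_one (R : Matrix ι ι ℂ) : (2 : ℂ) • reflectionProj R - 1 = R := by
  rw [reflectionProj, smul_inv_smul₀ two_ne_zero, add_sub_cancel_left]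

lemma isHermitian_reflectionProj {R : Matrix ι ι ℂ} (hR : R.IsHermitian) :
    (reflectionProj R).IsHermitian := by
  simp only [reflectionProj, Matrix.IsHermitian, Matrix.conjTranspose_smul,
    Matrix.conjTranspose_add, Matrix.conjTranspose_one, hR.eq, star_inv₀, star_ofNat]

variable [Fintype ι]

lemma reflectionProj_mul_self {R : Matrix ι ι ℂ} (hR : R * R = 1) :
    reflectionProj R * reflectionProj R = reflectionProj R := by
  have hsq : (1 + R) * (1 + R) = (2 : ℂ) • (1 + R) := by
    simp only [add_mul, mul_add, hR, one_mul, mul_one, two_smul]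
    abel
  rw [reflectionProj, Matrix.smul_mul, Matrix.mul_smul, hsq]
  module

end Reflection

noncomputable def maxEntangled (n : ℕ) : EuclideanSpace ℂ (Fin n × Fin n) :=
  WithLp.toLp 2 fun p => if p.1 = p.2 then ((√n : ℝ)⁻¹ : ℂ) else 0

lemma norm_maxEntangled {n : ℕ} (hn : n ≠ 0) : ‖maxEntangled n‖ = 1 := by
  rw [EuclideanSpace.norm_eq, Real.sqrt_eq_one, Fintype.sum_prod_type]
  simp [maxEntangled, apply_ite, hn]

lemma expect_kron_maxEntangled {n : ℕ} (A B : Matrix (Fin n) (Fin n) ℂ) :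
    expect (kron A B) (maxEntangled n) = (∑ i, ∑ j, A i j * B i j) / n := by
  have hc : ((√n : ℝ) : ℂ)⁻¹ * ((√n : ℝ) : ℂ)⁻¹ = (n : ℂ)⁻¹ := by
    rw [← mul_inv, ← Complex.ofReal_mul, Real.mul_self_sqrt n.cast_nonneg, Complex.ofReal_natCast]
  simp only [expect, Matrix.mulVec, dotProduct, Fintype.sum_prod_type, kron, maxEntangled,
    PiLp.toLp_apply, apply_ite conj, map_zero, map_inv₀, Complex.conj_ofReal, ite_mul, zero_mul,
    mul_ite, mul_zero, sum_ite_eq, mem_univ, if_true]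
  simp only [div_eq_mul_inv, ← hc, sum_mul, mul_sum]
  exact sum_congr rfl fun i _ => sum_congr rfl fun j _ => by ring

-- `a σ_z + b σ_x`
noncomputable def spinObservable (a b : ℝ) : Matrix (Fin 2) (Fin 2) ℂ := !![a, b; b, -a]

lemma isHermitian_spinObservable (a b : ℝ) : (spinObservable a b).IsHermitian := by
  ext i j
  fin_cases i <;> fin_cases j <;> simp [spinObservable]

lemma spinObservable_mul_self {a b : ℝ} (h : a ^ 2 + b ^ 2 = 1) :
    spinObservable a b * spinObservable a b = 1 := by
  have h' : (a : ℂ) ^ 2 + (b : ℂ) ^ 2 = 1 := by exact_mod_cast h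
  rw [spinObservable, Matrix.mul_fin_two, Matrix.one_fin_two]
  congr 5
  · linear_combination h'
  · ring
  · ring
  · linear_combination h'

lemma expect_kron_spinObservable_maxEntangled (a b c d : ℝ) :
    expect (kron (spinObservable a b) (spinObservable c d)) (maxEntangled 2) = a * c + b * d := by
  rw [expect_kron_maxEntangled]
  simp only [spinObservable, Fin.sum_univ_two, Matrix.of_apply, Matrix.cons_val',
    Matrix.cons_val_zero, Matrix.cons_val_fin_one, Matrix.cons_val_one, Nat.cast_ofNat]
  ring

/-- CHSH-type violation: there are a state on ℂ² ⊗ ℂ² and two projections on each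
factor such that no classical probability distribution on the four {0,1}-valued
outcomes reproduces all four quantum pairwise distributions as marginals. -/
theorem no_joint_distribution_for_quantum_correlations :
    ∃ (Psi : EuclideanSpace ℂ (Fin 2 × Fin 2))
      (Pa Pb : Fin 2 → Matrix (Fin 2) (Fin 2) ℂ),
      ‖Psi‖ = 1 ∧
      (∀ i, (Pa i).IsHermitian ∧ Pa i * Pa i = Pa i) ∧
      (∀ j, (Pb j).IsHermitian ∧ Pb j * Pb j = Pb j) ∧
      ¬ ∃ f : ((Fin 2 → Bool) × (Fin 2 → Bool)) → ℝ,
        (∀ x, 0 ≤ f x) ∧ (∑ x, f x = 1) ∧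
        (∀ (i j : Fin 2) (s t : Bool),
          ∑ x ∈ Finset.univ.filter (fun x : (Fin 2 → Bool) × (Fin 2 → Bool) =>
              x.1 i = s ∧ x.2 j = t), f x =
            (expect (kron (projVal (Pa i) s) (projVal (Pb j) t)) Psi).re) := by
  let alice : Fin 2 → ℝ × ℝ := ![(1, 0), (0, 1)]
  let bob : Fin 2 → ℝ × ℝ := ![(3 / 5, 4 / 5), (3 / 5, -4 / 5)]
  have hunit : ∀ i, (alice i).1 ^ 2 + (alice i).2 ^ 2 = 1 ∧ (bob i).1 ^ 2 + (bob i).2 ^ 2 = 1 := by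
    intro i; fin_cases i <;> norm_num [alice, bob]
  let R i := spinObservable (alice i).1 (alice i).2
  let S j := spinObservable (bob j).1 (bob j).2
  refine ⟨maxEntangled 2, fun i => reflectionProj (R i), fun j => reflectionProj (S j),
    norm_maxEntangled two_ne_zero,
    fun i => ⟨isHermitian_reflectionProj (isHermitian_spinObservable _ _),
      reflectionProj_mul_self (spinObservable_mul_self (hunit i).1)⟩,
    fun j => ⟨isHermitian_reflectionProj (isHermitian_spinObservable _ _),
      reflectionProj_mul_self (spinObservable_mul_self (hunit j).2)⟩, ?_⟩
  rintro ⟨f, hf, hf1, hmarginal⟩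
  have hcorr (i j : Fin 2) :
      correlation f i j = (alice i).1 * (bob j).1 + (alice i).2 * (bob j).2 := by
    rw [correlation_eq_sum_marginal]
    simp only [hmarginal, sum_boolSign_mul_expect_kron_projVal, two_smul_reflectionProj_sub_one,
      R, S, expect_kron_spinObservable_maxEntangled]
    norm_cast
  have hchsh := chsh_inequality hf hf1 0 1 0 1
  norm_num [hcorr, alice, bob] at hchsh
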